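/- Let G be a group finitely presented over its finite symmetric generating set S by relators of length at most K_G, and let H be a group with finite symmetric generating set T. For every σ ∈ Y_n, the function f : G → H defined by f(g) = ∫_{1_G·w} σ for any word w over S representing g is well-defined, is n-Lipschitz for the word metrics, satisfies f(1_G) = 1_H, and satisfies df = σ. Consequently Y_n = {df : f ∈ Lip_n(G,H)}. -/

import Mathlib

/-!
The integral along a word is multiplicative under concatenation, so the condition defining
`Y_n` makes it invariant under the elementary moves of the presentation, hence it depends only
on the element of `G` the word represents; this gives a well-defined `f` with `f 1 = 1`.
Appending a letter `s` to a word for `g` multiplies the integral by `σ(g)(s)`, so `df = σ`.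
Since the word metric of `H` is left-invariant, `d(f g, f (g s)) = d(1, σ(g)(s)) ≤ n`, and
summing along a geodesic of the Cayley graph of `G` shows `f` is `n`-Lipschitz. Conversely, the
integral of `df` telescopes to `f(g)⁻¹ f(g·w)`, which only depends on the element `w` represents.
-/

/-- The Cayley graph of a group with respect to a (symmetric) set `S`:
`g` and `g'` are adjacent when they differ by right multiplication by an element of `S`. -/
def cayley {G : Type*} [Group G] (S : Set G) : SimpleGraph G :=
  SimpleGraph.fromRel (fun g g' => g⁻¹ * g' ∈ S)

/-- The closed ball of radius `n` about `g` in the word metric induced by `S`. -/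
def ball {G : Type*} [Group G] (S : Set G) (n : ℕ) (g : G) : Set G :=
  {x : G | (cayley S).dist g x ≤ n}

/-- `f : G → H` is `n`-Lipschitz for the word metrics associated to `S` and `T`. -/
def IsLip {G H : Type*} [Group G] [Group H] (S : Set G) (T : Set H)
    (n : ℕ) (f : G → H) : Prop :=
  ∀ x y : G, (cayley T).dist (f x) (f y) ≤ n * (cayley S).dist x y

/-- The product in `G` of (the letters of) a word over `S`. -/
def wordProd {G : Type*} [Group G] (S : Finset G) (w : List ↥S) : G :=
  (w.map (fun s => (s : G))).prod

/-- The integral `∫_{g·w} σ` of a configuration `σ : G → (S → H)` along the word `w` based at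
`g` : the telescoping product `σ(g)(s₀)·σ(gs₀)(s₁)⋯σ(gs₀⋯s_{k-1})(s_k)`. -/
def sint {G H : Type*} [Group G] [Group H] {S : Finset G}
    (σ : G → ↥S → H) : G → List ↥S → H
  | _, [] => 1
  | g, s :: w => σ g s * sint σ (g * (s : G)) w

/-- An elementary homotopy move between words over `S`: replace a subword `v` of length at
most `K` by a word `v'` of length at most `K` representing the same element of `G`. -/
def ElemMove {G : Type*} [Group G] (S : Finset G) (K : ℕ) (w₁ w₂ : List ↥S) : Prop :=
  ∃ u v v' x : List ↥S, w₁ = u ++ v ++ x ∧ w₂ = u ++ v' ++ x ∧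
    v.length ≤ K ∧ v'.length ≤ K ∧ wordProd S v = wordProd S v'

/-- `G` is presented over the (symmetric) generating set `S` by relators of length at most
`K`: any two words over `S` representing the same element of `G` are connected by a finite
sequence of elementary moves of size at most `K`. -/
def PresentedBy {G : Type*} [Group G] (S : Finset G) (K : ℕ) : Prop :=
  ∀ w w' : List ↥S, wordProd S w = wordProd S w' →
    Relation.ReflTransGen (ElemMove S K) w w'

/-- Membership in `Y_n` (relative to relator bound `K`): `σ ∈ (B_H(n,1)^S)^G` is such that
for every `g ∈ G` and every pair of words `w₁, w₂` over `S` of length at most `K`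
representing the same element of `G`, `∫_{g·w₁} σ = ∫_{g·w₂} σ`. -/
def memY {G H : Type*} [Group G] [Group H] (S : Finset G) (T : Finset H) (n K : ℕ)
    (σ : G → ↥S → ↥(ball (T : Set H) n 1)) : Prop :=
  ∀ (g : G) (w₁ w₂ : List ↥S), w₁.length ≤ K → w₂.length ≤ K →
    wordProd S w₁ = wordProd S w₂ →
    sint (fun g s => ((σ g s : H))) g w₁ = sint (fun g s => ((σ g s : H))) g w₂


namespace SimpleGraph

variable {V V' : Type*} {G : SimpleGraph V} {G' : SimpleGraph V'}

lemma dist_map_le (φ : G →g G') {u v : V} (h : G.Reachable u v) :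
    G'.dist (φ u) (φ v) ≤ G.dist u v := by
  obtain ⟨p, hp⟩ := h.exists_walk_length_eq_dist
  calc G'.dist (φ u) (φ v) ≤ (p.map φ).length := dist_le _
    _ = G.dist u v := by rw [Walk.length_map, hp]

lemma Iso.dist_eq (φ : G ≃g G') (u v : V) : G'.dist (φ u) (φ v) = G.dist u v := by
  by_cases h : G.Reachable u v
  · refine le_antisymm (dist_map_le φ.toHom h) ?_
    simpa using dist_map_le φ.symm.toHom (φ.reachable_iff.mpr h)
  · rw [dist_eq_zero_of_not_reachable h,
      dist_eq_zero_of_not_reachable (mt φ.reachable_iff.mp h)]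

end SimpleGraph

section CayleyGraph

variable {G H : Type*} [Group G] [Group H]

lemma cayley_adj_iff {S : Set G} {x y : G} :
    (cayley S).Adj x y ↔ x ≠ y ∧ (x⁻¹ * y ∈ S ∨ y⁻¹ * x ∈ S) :=
  SimpleGraph.fromRel_adj _ _ _

def cayleyMulLeft (S : Set G) (a : G) : cayley S ≃g cayley S where
  toEquiv := Equiv.mulLeft a
  map_rel_iff' := by simp [cayley_adj_iff, mul_assoc]

lemma cayley_dist_mul_left (S : Set G) (a x y : G) :
    (cayley S).dist (a * x) (a * y) = (cayley S).dist x y :=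
  (cayleyMulLeft S a).dist_eq x y

lemma cayley_reachable_mul_right (S : Set G) (x : G) {s : G} (hs : s ∈ S) :
    (cayley S).Reachable x (x * s) := by
  by_cases h : x = x * s
  · exact h ▸ SimpleGraph.Reachable.refl x
  · exact SimpleGraph.Adj.reachable (cayley_adj_iff.mpr ⟨h, .inl (by simpa using hs)⟩)

lemma cayley_connected {S : Set G} (hS : Subgroup.closure S = ⊤) : (cayley S).Connected := by
  have reachable_one : ∀ g : G, (cayley S).Reachable 1 g := fun g => by
    induction hS ▸ Subgroup.mem_top g using Subgroup.closure_induction_right with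
    | one => exact .refl 1
    | mul_right x _ s hs ih => exact ih.trans (cayley_reachable_mul_right S x hs)
    | mul_inv_cancel x _ s hs ih =>
      exact ih.trans (by simpa using (cayley_reachable_mul_right S (x * s⁻¹) hs).symm)
  have : Nonempty G := ⟨1⟩
  exact .mk fun x y => (reachable_one x).symm.trans (reachable_one y)

lemma isLip_of_dist_mul_le {S : Set G} {T : Set H} {n : ℕ} (hS : (cayley S).Connected)
    (hT : (cayley T).Connected) {f : G → H}
    (hf : ∀ x, ∀ s ∈ S, (cayley T).dist (f x) (f (x * s)) ≤ n) :
    IsLip S T n f := by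
  have dist_le_of_adj : ∀ {x y}, (cayley S).Adj x y → (cayley T).dist (f x) (f y) ≤ n := by
    intro x y hxy
    rcases (cayley_adj_iff.mp hxy).2 with h | h
    · simpa using hf x _ h
    · simpa [SimpleGraph.dist_comm] using hf y _ h
  have dist_le_walk : ∀ {x y} (p : (cayley S).Walk x y),
      (cayley T).dist (f x) (f y) ≤ n * p.length := by
    intro x y p
    induction p with
    | nil => simp
    | cons hxy p ih =>
      calc _ ≤ _ := hT.dist_triangle
        _ ≤ n + n * p.length := add_le_add (dist_le_of_adj hxy) ih
        _ = _ := by rw [SimpleGraph.Walk.length_cons]; ring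
  intro x y
  obtain ⟨p, hp⟩ := hS.exists_walk_length_eq_dist x y
  exact hp ▸ dist_le_walk p

end CayleyGraph

section WordIntegral

variable {G H : Type*} [Group G] [Group H] {S : Finset G}

@[simp] lemma wordProd_nil : wordProd S [] = 1 := rfl

@[simp] lemma wordProd_cons (s : ↥S) (w : List ↥S) :
    wordProd S (s :: w) = s * wordProd S w := List.prod_cons

@[simp] lemma wordProd_append (w₁ w₂ : List ↥S) :
    wordProd S (w₁ ++ w₂) = wordProd S w₁ * wordProd S w₂ := by
  simp [wordProd]

lemma exists_wordProd_eq (hSsym : ∀ s ∈ S, s⁻¹ ∈ S)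
    (hSgen : Subgroup.closure (S : Set G) = ⊤) (g : G) : ∃ w : List ↥S, wordProd S w = g := by
  induction hSgen ▸ Subgroup.mem_top g using Subgroup.closure_induction_right with
  | one => exact ⟨[], rfl⟩
  | mul_right x _ s hs ih =>
    obtain ⟨w, rfl⟩ := ih
    exact ⟨w ++ [⟨s, hs⟩], by simp⟩
  | mul_inv_cancel x _ s hs ih =>
    obtain ⟨w, rfl⟩ := ih
    exact ⟨w ++ [⟨s⁻¹, hSsym s hs⟩], by simp⟩

lemma sint_append (σ : G → ↥S → H) (g : G) (w₁ w₂ : List ↥S) :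
    sint σ g (w₁ ++ w₂) = sint σ g w₁ * sint σ (g * wordProd S w₁) w₂ := by
  induction w₁ generalizing g with
  | nil => simp [sint]
  | cons s w ih => simp [sint, ih, mul_assoc]

lemma sint_derivative (f : G → H) (g : G) (w : List ↥S) :
    sint (fun g s => (f g)⁻¹ * f (g * s)) g w = (f g)⁻¹ * f (g * wordProd S w) := by
  induction w generalizing g with
  | nil => simp [sint]
  | cons s w ih => simp [sint, ih, mul_assoc]

/-- The condition defining `memY`, without the constraint on the values of `σ`: a cocycle on the
Cayley complex whose 2-cells are the relations of length at most `K`. -/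
def IsCocycle (S : Finset G) (K : ℕ) (σ : G → ↥S → H) : Prop :=
  ∀ (g : G) (w₁ w₂ : List ↥S), w₁.length ≤ K → w₂.length ≤ K →
    wordProd S w₁ = wordProd S w₂ → sint σ g w₁ = sint σ g w₂

lemma IsCocycle.sint_eq_of_elemMove {K : ℕ} {σ : G → ↥S → H} (hσ : IsCocycle S K σ)
    {w₁ w₂ : List ↥S} (hmove : ElemMove S K w₁ w₂) (g : G) : sint σ g w₁ = sint σ g w₂ := by
  obtain ⟨u, v, v', x, rfl, rfl, hv, hv', hvv'⟩ := hmove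
  simp only [sint_append, wordProd_append, hσ _ v v' hv hv' hvv', hvv']

lemma IsCocycle.sint_eq_of_presentedBy {K : ℕ} {σ : G → ↥S → H} (hσ : IsCocycle S K σ)
    (hpres : PresentedBy S K) {w₁ w₂ : List ↥S} (h : wordProd S w₁ = wordProd S w₂) (g : G) :
    sint σ g w₁ = sint σ g w₂ := by
  have hmoves := hpres w₁ w₂ h
  clear h
  induction hmoves with
  | refl => rfl
  | tail _ hmove ih => exact ih.trans (hσ.sint_eq_of_elemMove hmove g)

lemma exists_primitive (hSsym : ∀ s ∈ S, s⁻¹ ∈ S)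
    (hSgen : Subgroup.closure (S : Set G) = ⊤) {σ : G → ↥S → H}
    (hσ : ∀ w₁ w₂ : List ↥S, wordProd S w₁ = wordProd S w₂ → sint σ 1 w₁ = sint σ 1 w₂) :
    ∃ f : G → H, (∀ w, sint σ 1 w = f (wordProd S w)) ∧
      ∀ (g : G) (s : ↥S), σ g s = (f g)⁻¹ * f (g * s) := by
  choose word hword using exists_wordProd_eq hSsym hSgen
  have sint_eq (w : List ↥S) : sint σ 1 w = sint σ 1 (word (wordProd S w)) :=
    hσ _ _ (hword _).symm
  refine ⟨fun g => sint σ 1 (word g), sint_eq, fun g s => ?_⟩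
  have append_letter : sint σ 1 (word g ++ [s]) = sint σ 1 (word g) * σ g s := by
    simp [sint_append, sint, hword]
  rw [eq_inv_mul_iff_mul_eq, ← append_letter, sint_eq]
  simp [hword]

lemma memY_of_derivative {T : Finset H} {n K : ℕ} {σ : G → ↥S → ↥(ball (T : Set H) n 1)}
    (f : G → H) (hf : ∀ (g : G) (s : ↥S), (σ g s : H) = (f g)⁻¹ * f (g * s)) :
    memY S T n K σ := by
  intro g w₁ w₂ _ _ h
  simp only [hf, sint_derivative, h]

end WordIntegral

lemma exists_isLip_primitive_of_memY {G H : Type*} [Group G] [Group H] {S : Finset G}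
    {T : Finset H} (hSsym : ∀ s ∈ S, s⁻¹ ∈ S) (hSgen : Subgroup.closure (S : Set G) = ⊤)
    (hTgen : Subgroup.closure (T : Set H) = ⊤) {K n : ℕ} (hpres : PresentedBy S K)
    {σ : G → ↥S → ↥(ball (T : Set H) n 1)} (hσ : memY S T n K σ) :
    ∃ f : G → H,
      (∀ (g : G) (w : List ↥S), wordProd S w = g → sint (fun g s => (σ g s : H)) 1 w = f g) ∧
      IsLip (S : Set G) (T : Set H) n f ∧ f 1 = 1 ∧
      ∀ (g : G) (s : ↥S), (σ g s : H) = (f g)⁻¹ * f (g * s) := by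
  obtain ⟨f, hf_sint, hf_deriv⟩ := exists_primitive hSsym hSgen
    fun w₁ w₂ h => IsCocycle.sint_eq_of_presentedBy hσ hpres h 1
  have hf_lip : IsLip (S : Set G) (T : Set H) n f := by
    refine isLip_of_dist_mul_le (cayley_connected hSgen) (cayley_connected hTgen)
      fun g s hs => ?_
    rw [← cayley_dist_mul_left _ (f g)⁻¹, inv_mul_cancel, ← hf_deriv g ⟨s, hs⟩]
    exact (σ g ⟨s, hs⟩).2
  exact ⟨f, fun g w hw => hw ▸ hf_sint w, hf_lip, (hf_sint []).symm, hf_deriv⟩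

theorem stmt13_general {G H : Type*} [Group G] [Group H] (S : Finset G) (T : Finset H)
    (hSsym : ∀ s ∈ S, s⁻¹ ∈ S) (hSgen : Subgroup.closure (S : Set G) = ⊤)
    (hTgen : Subgroup.closure (T : Set H) = ⊤)
    (K n : ℕ) (hpres : PresentedBy S K) :
    (∀ σ : G → ↥S → ↥(ball (T : Set H) n 1), memY S T n K σ →
      ∃ f : G → H,
        (∀ (g : G) (w : List ↥S), wordProd S w = g →
          sint (fun g s => ((σ g s : H))) 1 w = f g) ∧
        IsLip (S : Set G) (T : Set H) n f ∧ f 1 = 1 ∧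
        (∀ (g : G) (s : ↥S), ((σ g s : H)) = (f g)⁻¹ * f (g * ↑s))) ∧
    {σ : G → ↥S → ↥(ball (T : Set H) n 1) | memY S T n K σ} =
      {σ : G → ↥S → ↥(ball (T : Set H) n 1) |
        ∃ f : G → H, IsLip (S : Set G) (T : Set H) n f ∧
          ∀ (g : G) (s : ↥S), ((σ g s : H)) = (f g)⁻¹ * f (g * ↑s)} := by
  refine ⟨fun σ hσ => exists_isLip_primitive_of_memY hSsym hSgen hTgen hpres hσ,
    Set.ext fun σ => ⟨fun hσ => ?_, fun ⟨f, _, hf⟩ => memY_of_derivative f hf⟩⟩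
  obtain ⟨f, -, hf_lip, -, hf_deriv⟩ :=
    exists_isLip_primitive_of_memY hSsym hSgen hTgen hpres hσ
  exact ⟨f, hf_lip, hf_deriv⟩

/-- if `G` is presented over `S` by relators of length at most `K`, then for
every `σ ∈ Y_n` the function `f(g) = ∫_{1_G·w} σ` (for any word `w` representing `g`) is
well-defined, `n`-Lipschitz, satisfies `f(1) = 1` and `df = σ`; consequently
`Y_n = {df : f ∈ Lip_n(G,H)}`. -/
theorem stmt13 {G H : Type*} [Group G] [Group H] (S : Finset G) (T : Finset H)
    (hSsym : ∀ s ∈ S, s⁻¹ ∈ S) (hSgen : Subgroup.closure (S : Set G) = ⊤)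
    (hTsym : ∀ t ∈ T, t⁻¹ ∈ T) (hTgen : Subgroup.closure (T : Set H) = ⊤)
    (K n : ℕ) (hpres : PresentedBy S K) :
    (∀ σ : G → ↥S → ↥(ball (T : Set H) n 1), memY S T n K σ →
      ∃ f : G → H,
        (∀ (g : G) (w : List ↥S), wordProd S w = g →
          sint (fun g s => ((σ g s : H))) 1 w = f g) ∧
        IsLip (S : Set G) (T : Set H) n f ∧ f 1 = 1 ∧
        (∀ (g : G) (s : ↥S), ((σ g s : H)) = (f g)⁻¹ * f (g * ↑s))) ∧
    {σ : G → ↥S → ↥(ball (T : Set H) n 1) | memY S T n K σ} =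
      {σ : G → ↥S → ↥(ball (T : Set H) n 1) |
        ∃ f : G → H, IsLip (S : Set G) (T : Set H) n f ∧
          ∀ (g : G) (s : ↥S), ((σ g s : H)) = (f g)⁻¹ * f (g * ↑s)} :=
  stmt13_general S T hSsym hSgen hTgen K n hpres
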